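/- Let n, t be positive integers, let α ≥ 0, and let F ∈ ℂ^{n×n} be a unitary matrix all of whose entries satisfy |F_{ij}| ≤ α. Let x̂ ∈ ℂ^n, let e, e' ∈ ℂ^n both be t-sparse, let y = F^{-1}x̂ + e, and let z = F(y − e'). Then ‖x̂ − z‖_∞ ≤ α·√(2t)·‖e' − e‖₂. -/

import Mathlib

/-- The Euclidean (ℓ2) norm of a complex vector. -/
noncomputable def l2norm {n : ℕ} (x : Fin n → ℂ) : ℝ :=
  Real.sqrt (∑ i, ‖x i‖ ^ 2)

/-- A vector is `t`-sparse if at most `t` of its entries are nonzero. -/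
def Sparse {n : ℕ} (t : ℕ) (x : Fin n → ℂ) : Prop :=
  (Finset.univ.filter (fun i => x i ≠ 0)).card ≤ t

/-!
Since `F Fᴴ = 1`, the error `x̂ - z` equals `F (e' - e)`, and `e' - e` is `2t`-sparse.
Each entry of `F v` is bounded by `α ‖v‖₁`, and by Cauchy–Schwarz on the support of `v`,
`‖v‖₁ ≤ √(#supp v) ‖v‖₂`.
-/

open Finset Matrix

theorem Sparse.sub {n s t : ℕ} {x y : Fin n → ℂ} (hx : Sparse s x) (hy : Sparse t y) :
    Sparse (s + t) (x - y) := by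
  have hsupp : univ.filter (fun i => (x - y) i ≠ 0) ⊆
      univ.filter (fun i => x i ≠ 0) ∪ univ.filter (fun i => y i ≠ 0) := by
    intro i
    simp only [mem_union, mem_filter, mem_univ, true_and, Pi.sub_apply]
    contrapose!
    rintro ⟨hxi, hyi⟩
    rw [hxi, hyi, sub_zero]
  exact (card_le_card hsupp).trans ((card_union_le _ _).trans (Nat.add_le_add hx hy))

theorem sum_norm_le_sqrt_mul_l2norm {n t : ℕ} {v : Fin n → ℂ} (hv : Sparse t v) :
    ∑ j, ‖v j‖ ≤ Real.sqrt t * l2norm v := by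
  set S := univ.filter (fun j => v j ≠ 0)
  have hS : ∑ j, ‖v j‖ = ∑ j ∈ S, ‖v j‖ :=
    (sum_subset (subset_univ S) fun j _ hj => by simp_all [S]).symm
  have hcs : (∑ j ∈ S, ‖v j‖) ^ 2 ≤ t * ∑ j, ‖v j‖ ^ 2 :=
    calc (∑ j ∈ S, ‖v j‖) ^ 2 ≤ #S * ∑ j ∈ S, ‖v j‖ ^ 2 := sq_sum_le_card_mul_sum_sq
      _ ≤ t * ∑ j, ‖v j‖ ^ 2 := by
        gcongr
        · exact_mod_cast hv
        · exact subset_univ S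
  rw [hS, l2norm, ← Real.sqrt_mul (Nat.cast_nonneg t)]
  exact Real.le_sqrt_of_sq_le hcs

theorem norm_mulVec_apply_le {ι : Type*} {n : ℕ} {α : ℝ} {F : Matrix ι (Fin n) ℂ}
    (hF : ∀ i j, ‖F i j‖ ≤ α) (v : Fin n → ℂ) (i : ι) :
    ‖(F *ᵥ v) i‖ ≤ α * ∑ j, ‖v j‖ :=
  calc ‖(F *ᵥ v) i‖ ≤ ∑ j, ‖F i j‖ * ‖v j‖ := by
        simpa only [mulVec, dotProduct, norm_mul] using norm_sum_le univ fun j => F i j * v j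
    _ ≤ ∑ j, α * ‖v j‖ := by gcongr; exact hF i j
    _ = α * ∑ j, ‖v j‖ := (mul_sum _ _ _).symm

theorem norm_mulVec_apply_le_of_sparse {ι : Type*} {n t : ℕ} {α : ℝ} (hα : 0 ≤ α)
    {F : Matrix ι (Fin n) ℂ} (hF : ∀ i j, ‖F i j‖ ≤ α) {v : Fin n → ℂ} (hv : Sparse t v)
    (i : ι) : ‖(F *ᵥ v) i‖ ≤ α * Real.sqrt t * l2norm v :=
  calc ‖(F *ᵥ v) i‖ ≤ α * ∑ j, ‖v j‖ := norm_mulVec_apply_le hF v i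
    _ ≤ α * (Real.sqrt t * l2norm v) := by gcongr; exact sum_norm_le_sqrt_mul_l2norm hv
    _ = α * Real.sqrt t * l2norm v := (mul_assoc _ _ _).symm

theorem sub_mulVec_conjTranspose_add_sub {n : ℕ} {F : Matrix (Fin n) (Fin n) ℂ}
    (hF : F * Fᴴ = 1) (x e e' : Fin n → ℂ) :
    x - F *ᵥ (Fᴴ *ᵥ x + e - e') = F *ᵥ (e' - e) := by
  rw [add_sub_assoc, mulVec_add, mulVec_mulVec, hF, one_mulVec, ← neg_sub e' e, mulVec_neg]
  abel

theorem linfty_estimate_general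
    (n t : ℕ) (α : ℝ) (hα : 0 ≤ α)
    (F : Matrix (Fin n) (Fin n) ℂ)
    (hFunit : F * F.conjTranspose = 1 ∧ F.conjTranspose * F = 1)
    (hF : ∀ i j, ‖F i j‖ ≤ α)
    (xhat : Fin n → ℂ)
    (e e' : Fin n → ℂ) (he : Sparse t e) (he' : Sparse t e')
    (y : Fin n → ℂ) (hy : y = F.conjTranspose.mulVec xhat + e)
    (z : Fin n → ℂ) (hz : z = F.mulVec (y - e')) :
    ∀ i, ‖(xhat - z) i‖ ≤ α * Real.sqrt (2 * t) * l2norm (e' - e) := by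
  intro i
  have hdiff : xhat - z = F *ᵥ (e' - e) := by
    rw [hz, hy]
    exact sub_mulVec_conjTranspose_add_sub hFunit.1 xhat e e'
  have hsparse : Sparse (2 * t) (e' - e) := two_mul t ▸ he'.sub he
  rw [hdiff]
  exact_mod_cast norm_mulVec_apply_le_of_sparse hα hF hsparse i

/-- Key ℓ∞ estimate in the proof of the Main Theorem: with `y = F⁻¹x̂ + e` and
`z = F(y − e')`, the difference `x̂ − z = F(e' − e)` is the image of a `2t`-sparse
vector, so `‖x̂ − z‖_∞ ≤ α·√(2t)·‖e' − e‖₂`. Here `F⁻¹ = Fᴴ`. -/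
theorem linfty_estimate
    (n t : ℕ) (hn : 0 < n) (ht : 0 < t) (α : ℝ) (hα : 0 ≤ α)
    (F : Matrix (Fin n) (Fin n) ℂ)
    (hFunit : F * F.conjTranspose = 1 ∧ F.conjTranspose * F = 1)
    (hF : ∀ i j, ‖F i j‖ ≤ α)
    (xhat : Fin n → ℂ)
    (e e' : Fin n → ℂ) (he : Sparse t e) (he' : Sparse t e')
    (y : Fin n → ℂ) (hy : y = F.conjTranspose.mulVec xhat + e)
    (z : Fin n → ℂ) (hz : z = F.mulVec (y - e')) :
    ∀ i, ‖(xhat - z) i‖ ≤ α * Real.sqrt (2 * t) * l2norm (e' - e) :=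
  linfty_estimate_general n t α hα F hFunit hF xhat e e' he he' y hy z hz
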